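/- arXiv:2308.14226 — 2 statements merged into one kernel-verified Lean document; each statement's English description precedes it below -/
import Mathlib

section
/- Let F be a free group with basis {g_j | j ∈ J}, K ⊆ J, H the subgroup generated by {g_j | j ∈ K}, R a normal subgroup of F, and M the set of all normal subgroups of F contained in R. If H ∩ R = 1, then for every N ∈ M and every v ∈ N: if D_k(v) ≡ 0 mod ℤ[F]·(N−1) for all k ∈ J \ K, then v ∈ [N,N]. -/
open scoped Classical

/-- The augmentation map `ℤ[F] → ℤ` induced by the trivial homomorphism `F → 1`. -/
noncomputable def aug (J : Type) : MonoidAlgebra ℤ (FreeGroup J) →ₐ[ℤ] ℤ :=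
  MonoidAlgebra.lift ℤ ℤ (FreeGroup J) 1

/-- `D` is the Fox derivative of `ℤ[F]` with respect to the generator `g_k`:
it is ℤ-linear, satisfies `D(uv) = D(u)v + ε(u)D(v)`, and sends `g_j` to `δ_{kj}`. -/
def IsFoxDerivative {J : Type} (k : J)
    (D : MonoidAlgebra ℤ (FreeGroup J) →ₗ[ℤ] MonoidAlgebra ℤ (FreeGroup J)) : Prop :=
  (∀ u v : MonoidAlgebra ℤ (FreeGroup J), D (u * v) = D u * v + (aug J u) • D v) ∧
  (∀ j : J, D (MonoidAlgebra.of ℤ (FreeGroup J) (FreeGroup.of j)) = if k = j then 1 else 0)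

/-- The ideal `ℤ[F]·(N−1)` of `ℤ[F]` generated by the elements `n − 1`, `n ∈ N`. -/
noncomputable def NIdeal {J : Type} (N : Subgroup (FreeGroup J)) :
    Submodule ℤ (MonoidAlgebra ℤ (FreeGroup J)) :=
  Submodule.span ℤ {a | ∃ u : MonoidAlgebra ℤ (FreeGroup J), ∃ n ∈ N,
    a = u * (MonoidAlgebra.of ℤ (FreeGroup J) n - 1)}

/-- The ideal `d·ℤ[F]` of multiples of the integer `d`. -/
noncomputable def dIdeal {J : Type} (d : ℤ) : Submodule ℤ (MonoidAlgebra ℤ (FreeGroup J)) :=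
  Submodule.span ℤ {a | ∃ u : MonoidAlgebra ℤ (FreeGroup J), a = d • u}

/-!
Write `I = ℤ[F]·(N−1)` and `Δ` for the augmentation ideal. The fundamental formula of Fox calculus
gives `v − 1 = ∑ⱼ (gⱼ − 1)·Dⱼ(v)`, so once every `Dⱼ(v)` lies in `I` we get `v − 1 ∈ Δ·I`. Choosing
for each `f` its offset `w f ∈ N` from a fixed representative of `fN`, the linear map
`ℤ[F] → N^ab, f ↦ [w f]` kills `Δ·I` and sends `v − 1` to `[v]`, hence `v ∈ [N,N]`.

It remains to get `D_k(v) ∈ I` for `k ∈ K`. As `H ∩ N = 1`, `H` embeds in `F/N`, so `f` has an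
`H`-component `p f`, left `H`-equivariant and right `N`-invariant. Then
`Φ(f) = D_k(p f)·(p f)⁻¹f` extends `D_k` linearly, maps `I` into `I` and satisfies
`Φ((gⱼ − 1)u) = δₖⱼ u` for `j ∈ K`. Applying `Φ` to
`∑_{j ∈ K} (gⱼ − 1)Dⱼ(v) = (v − 1) − ∑_{j ∉ K} (gⱼ − 1)Dⱼ(v) ∈ I` gives `D_k(v) ∈ I`.
-/

open scoped MonoidAlgebra
open MonoidAlgebra (of)
open Filter

section FoxCalculus

section Cosets

variable {G : Type*} [Group G]

theorem Subgroup.exists_map_mul_eq_mul (N : Subgroup G) :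
    ∃ w : G → N, ∀ g, ∀ n : N, w (g * n) = w g * n :=
  ⟨fun g => ⟨(g : G ⧸ N).out⁻¹ * g, QuotientGroup.eq.mp (QuotientGroup.out_eq' _)⟩, fun g n => by
    ext; simp [QuotientGroup.mk_mul_of_mem g n.2, mul_assoc]⟩

theorem Subgroup.exists_map_mul_left_of_inf_eq_bot {H N : Subgroup G} [N.Normal]
    (hHN : H ⊓ N = ⊥) :
    ∃ p : G → G, (∀ h ∈ H, ∀ g, p (h * g) = h * p g) ∧ (∀ g, ∀ n ∈ N, p (g * n) = p g) := by
  set q := QuotientGroup.mk' N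
  have hq : ∀ a ∈ H, ∀ b ∈ H, q a = q b → a = b := by
    intro a ha b hb hab
    have hab' : a⁻¹ * b ∈ H ⊓ N :=
      Subgroup.mem_inf.mpr ⟨mul_mem (inv_mem ha) hb, QuotientGroup.eq.mp hab⟩
    rwa [hHN, Subgroup.mem_bot, inv_mul_eq_one] at hab'
  let r := QuotientGroup.rightRel (H.map q)
  have hr : ∀ x : G ⧸ N, ∃ h ∈ H, q h = x * (Quotient.mk r x).out⁻¹ := fun x =>
    QuotientGroup.rightRel_apply.mp (Quotient.mk_out (s := r) x)
  choose P hPH hPq using hr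
  refine ⟨fun g => P (q g), fun h hh g => ?_, fun g n hn => ?_⟩
  · have hcls : Quotient.mk r (q (h * g)) = Quotient.mk r (q g) :=
      Quotient.sound (QuotientGroup.rightRel_apply.mpr ⟨h⁻¹, inv_mem hh, by simp⟩)
    refine hq _ (hPH _) _ (mul_mem hh (hPH _)) ?_
    rw [hPq, hcls, map_mul, map_mul, hPq, mul_assoc]
  · simp [q, QuotientGroup.mk_mul_of_mem g hn]

end Cosets

variable {J : Type}

theorem aug_of (f : FreeGroup J) : aug J (of ℤ _ f) = 1 := by
  simp [aug]

namespace IsFoxDerivative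

variable {k : J} {D : ℤ[FreeGroup J] →ₗ[ℤ] ℤ[FreeGroup J]}

theorem map_of_mul (hD : IsFoxDerivative k D) (f : FreeGroup J) (u : ℤ[FreeGroup J]) :
    D (of ℤ _ f * u) = D (of ℤ _ f) * u + D u := by
  rw [hD.1, aug_of, one_smul]

theorem map_one_eq_zero (hD : IsFoxDerivative k D) : D 1 = 0 := by
  simpa using hD.map_of_mul 1 1

theorem map_of_inv (hD : IsFoxDerivative k D) (f : FreeGroup J) :
    D (of ℤ _ f⁻¹) = -(D (of ℤ _ f) * of ℤ _ f⁻¹) := by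
  have h := hD.map_of_mul f (of ℤ _ f⁻¹)
  rw [← map_mul, mul_inv_cancel, map_one, hD.map_one_eq_zero] at h
  exact eq_neg_of_add_eq_zero_right h.symm

end IsFoxDerivative

theorem fox_fundamental_formula {D : J → ℤ[FreeGroup J] →ₗ[ℤ] ℤ[FreeGroup J]}
    (hD : ∀ j, IsFoxDerivative j (D j)) (w : FreeGroup J) :
    ∀ᶠ t in atTop, of ℤ _ w - 1 = ∑ j ∈ t, (of ℤ _ (FreeGroup.of j) - 1) * D j (of ℤ _ w) := by
  induction w using FreeGroup.induction_on with
  | C1 =>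
    exact .of_forall fun t => by
      simp only [map_one, sub_self, (hD _).map_one_eq_zero, mul_zero, Finset.sum_const_zero]
  | of i =>
    filter_upwards [eventually_ge_atTop {i}] with t ht
    rw [Finset.sum_congr rfl fun j _ => congrArg _ ((hD j).2 i)]
    simp only [mul_ite, mul_one, mul_zero, Finset.sum_ite_eq', Finset.singleton_subset_iff.mp ht,
      if_true]
  | inv_of i ih =>
    filter_upwards [ih] with t ht
    calc of ℤ _ (FreeGroup.of i)⁻¹ - 1
        = -((of ℤ _ (FreeGroup.of i) - 1) * of ℤ _ (FreeGroup.of i)⁻¹) := by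
          rw [sub_mul, ← map_mul, mul_inv_cancel, map_one, one_mul, neg_sub]
      _ = _ := by
          rw [ht, Finset.sum_mul, ← Finset.sum_neg_distrib]
          simp only [(hD _).map_of_inv, mul_neg, mul_assoc]
  | mul x y ihx ihy =>
    filter_upwards [ihx, ihy] with t hx hy
    calc of ℤ _ (x * y) - 1 = (of ℤ _ x - 1) * of ℤ _ y + (of ℤ _ y - 1) := by
          rw [map_mul]; noncomm_ring
      _ = _ := by
          rw [hx, hy, Finset.sum_mul, ← Finset.sum_add_distrib]
          simp only [map_mul, (hD _).map_of_mul, mul_add, mul_assoc]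

theorem sub_one_mem_nIdeal {N : Subgroup (FreeGroup J)} {n : FreeGroup J} (hn : n ∈ N) :
    of ℤ _ n - 1 ∈ NIdeal N :=
  Submodule.subset_span ⟨1, n, hn, (one_mul _).symm⟩

theorem mul_mem_nIdeal {N : Subgroup (FreeGroup J)} (a : ℤ[FreeGroup J]) {x : ℤ[FreeGroup J]}
    (hx : x ∈ NIdeal N) : a * x ∈ NIdeal N := by
  induction hx using Submodule.span_induction with
  | mem x hx =>
    obtain ⟨u, n, hn, rfl⟩ := hx
    exact Submodule.subset_span ⟨a * u, n, hn, (mul_assoc _ _ _).symm⟩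
  | zero => simp
  | add x y _ _ hx hy => simpa [mul_add] using add_mem hx hy
  | smul c x _ hx => rw [mul_smul_comm]; exact Submodule.smul_mem _ c hx

noncomputable def foxExtension (D : ℤ[FreeGroup J] →ₗ[ℤ] ℤ[FreeGroup J])
    (p : FreeGroup J → FreeGroup J) : ℤ[FreeGroup J] →ₗ[ℤ] ℤ[FreeGroup J] :=
  (MonoidAlgebra.basis (FreeGroup J) ℤ).constr ℤ fun f => D (of ℤ _ (p f)) * of ℤ _ ((p f)⁻¹ * f)

section foxExtension

variable {D : ℤ[FreeGroup J] →ₗ[ℤ] ℤ[FreeGroup J]} {p : FreeGroup J → FreeGroup J}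

theorem foxExtension_of (f : FreeGroup J) :
    foxExtension D p (of ℤ _ f) = D (of ℤ _ (p f)) * of ℤ _ ((p f)⁻¹ * f) :=
  (MonoidAlgebra.basis (FreeGroup J) ℤ).constr_basis ℤ _ f

theorem foxExtension_mul_of {n : FreeGroup J} (hp : ∀ f, p (f * n) = p f) (u : ℤ[FreeGroup J]) :
    foxExtension D p (u * of ℤ _ n) = foxExtension D p u * of ℤ _ n := by
  induction u using MonoidAlgebra.induction_on with
  | of f => rw [← map_mul, foxExtension_of, foxExtension_of, hp, mul_assoc, ← map_mul, mul_assoc]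
  | add x y hx hy => rw [add_mul, map_add, map_add, hx, hy, add_mul]
  | smul c x hx => rw [smul_mul_assoc, map_smul, map_smul, hx, smul_mul_assoc]

theorem foxExtension_of_mul {k : J} (hD : IsFoxDerivative k D) {h : FreeGroup J}
    (hp : ∀ f, p (h * f) = h * p f) (u : ℤ[FreeGroup J]) :
    foxExtension D p (of ℤ _ h * u) = D (of ℤ _ h) * u + foxExtension D p u := by
  induction u using MonoidAlgebra.induction_on with
  | of f =>
    rw [← map_mul, foxExtension_of, foxExtension_of, hp, map_mul, hD.map_of_mul, add_mul,
      mul_assoc, ← map_mul, mul_inv_rev, mul_assoc, inv_mul_cancel_left, mul_inv_cancel_left]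
  | add x y hx hy => rw [mul_add, map_add, map_add, hx, hy, mul_add]; abel
  | smul c x hx => rw [mul_smul_comm, map_smul, map_smul, hx, mul_smul_comm, smul_add]

theorem foxExtension_mem_nIdeal {N : Subgroup (FreeGroup J)} (hp : ∀ f, ∀ n ∈ N, p (f * n) = p f)
    {x : ℤ[FreeGroup J]} (hx : x ∈ NIdeal N) : foxExtension D p x ∈ NIdeal N := by
  refine (Submodule.span_le.mpr ?_ : NIdeal N ≤ (NIdeal N).comap (foxExtension D p)) hx
  rintro _ ⟨u, n, hn, rfl⟩
  rw [SetLike.mem_coe, Submodule.mem_comap, mul_sub, mul_one, map_sub,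
    foxExtension_mul_of fun f => hp f n hn, ← mul_sub_one]
  exact Submodule.subset_span ⟨_, n, hn, rfl⟩

end foxExtension

theorem foxDerivative_mem_nIdeal_of_inf_eq_bot {D : J → ℤ[FreeGroup J] →ₗ[ℤ] ℤ[FreeGroup J]}
    (hD : ∀ j, IsFoxDerivative j (D j)) {K : Set J} {H N : Subgroup (FreeGroup J)} [N.Normal]
    (hK : ∀ j ∈ K, FreeGroup.of j ∈ H) (hHN : H ⊓ N = ⊥) {v : FreeGroup J} (hv : v ∈ N)
    (hvD : ∀ j ∉ K, D j (of ℤ _ v) ∈ NIdeal N) (k : J) : D k (of ℤ _ v) ∈ NIdeal N := by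
  refine (em (k ∈ K)).elim (fun hk => ?_) (hvD k)
  obtain ⟨p, hp_left, hp_right⟩ := Subgroup.exists_map_mul_left_of_inf_eq_bot hHN
  obtain ⟨t, ht, hkt⟩ := ((fox_fundamental_formula hD v).and (eventually_ge_atTop {k})).exists
  set e := fun j => (of ℤ _ (FreeGroup.of j) - 1) * D j (of ℤ _ v)
  have hsum : ∑ j ∈ t with j ∈ K, e j ∈ NIdeal N := by
    rw [eq_sub_of_add_eq (Finset.sum_filter_add_sum_filter_not t (· ∈ K) e), ← ht]
    refine sub_mem (sub_one_mem_nIdeal hv) (Submodule.sum_mem _ fun j hj => ?_)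
    exact mul_mem_nIdeal _ (hvD j (Finset.mem_filter.mp hj).2)
  have hext : ∀ j ∈ K, foxExtension (D k) p (e j) = if k = j then D j (of ℤ _ v) else 0 := by
    intro j hj
    simp only [e]
    rw [sub_mul, one_mul, map_sub, foxExtension_of_mul (hD k) (hp_left _ (hK j hj)),
      add_sub_cancel_right, (hD k).2, ite_mul, one_mul, zero_mul]
  have hk_mem : k ∈ t.filter (· ∈ K) :=
    Finset.mem_filter.mpr ⟨Finset.singleton_subset_iff.mp hkt, hk⟩
  have := foxExtension_mem_nIdeal (D := D k) hp_right hsum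
  rwa [map_sum, Finset.sum_congr rfl fun j hj => hext j (Finset.mem_filter.mp hj).2,
    Finset.sum_ite_eq, if_pos hk_mem] at this

section cosetAbelianization

variable {N : Subgroup (FreeGroup J)} {w : FreeGroup J → N}

noncomputable def cosetAbelianization (w : FreeGroup J → N) :
    ℤ[FreeGroup J] →ₗ[ℤ] Additive (Abelianization N) :=
  (MonoidAlgebra.basis (FreeGroup J) ℤ).constr ℤ fun f => .ofMul (.of (w f))

theorem cosetAbelianization_of (f : FreeGroup J) :
    cosetAbelianization w (of ℤ _ f) = .ofMul (.of (w f)) :=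
  (MonoidAlgebra.basis (FreeGroup J) ℤ).constr_basis ℤ _ f

theorem cosetAbelianization_mul_sub_one (hw : ∀ f, ∀ n : N, w (f * n) = w f * n)
    (u : ℤ[FreeGroup J]) (n : N) :
    cosetAbelianization w (u * (of ℤ _ (n : FreeGroup J) - 1)) = aug J u • .ofMul (.of n) := by
  induction u using MonoidAlgebra.induction_on with
  | of f =>
    rw [mul_sub_one, ← map_mul, map_sub, cosetAbelianization_of, cosetAbelianization_of, hw,
      map_mul, ofMul_mul, add_sub_cancel_left, aug_of, one_smul]
  | add x y hx hy => rw [add_mul, map_add, hx, hy, map_add, add_smul]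
  | smul c x hx => rw [smul_mul_assoc, map_smul, hx, map_smul, smul_assoc]

theorem cosetAbelianization_sub_one_mul (hw : ∀ f, ∀ n : N, w (f * n) = w f * n)
    (g : FreeGroup J) {x : ℤ[FreeGroup J]} (hx : x ∈ NIdeal N) :
    cosetAbelianization w ((of ℤ _ g - 1) * x) = 0 := by
  refine (Submodule.span_le.mpr ?_ :
    NIdeal N ≤ LinearMap.ker (cosetAbelianization w ∘ₗ LinearMap.mulLeft ℤ (of ℤ _ g - 1))) hx
  rintro _ ⟨u, n, hn, rfl⟩
  rw [SetLike.mem_coe, LinearMap.mem_ker, LinearMap.comp_apply, LinearMap.mulLeft_apply,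
    sub_one_mul, map_sub, ← mul_assoc, cosetAbelianization_mul_sub_one hw _ ⟨n, hn⟩,
    cosetAbelianization_mul_sub_one hw _ ⟨n, hn⟩, map_mul, aug_of, one_mul, sub_self]

end cosetAbelianization

theorem mem_commutator_of_foxDerivative_mem_nIdeal
    {D : J → ℤ[FreeGroup J] →ₗ[ℤ] ℤ[FreeGroup J]} (hD : ∀ j, IsFoxDerivative j (D j))
    {N : Subgroup (FreeGroup J)} {v : FreeGroup J} (hv : v ∈ N)
    (hvD : ∀ j, D j (of ℤ _ v) ∈ NIdeal N) : v ∈ ⁅N, N⁆ := by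
  obtain ⟨w, hw⟩ := N.exists_map_mul_eq_mul
  obtain ⟨t, ht⟩ := (fox_fundamental_formula hD v).exists
  have hzero : cosetAbelianization w (of ℤ _ v - 1) = 0 := by
    rw [ht, map_sum]
    exact Finset.sum_eq_zero fun j _ => cosetAbelianization_sub_one_mul hw _ (hvD j)
  have h := cosetAbelianization_mul_sub_one hw 1 ⟨v, hv⟩
  rw [one_mul, hzero, map_one, one_smul, eq_comm, ofMul_eq_zero, ← MonoidHom.mem_ker,
    Abelianization.ker_of] at h
  rw [← N.map_subtype_commutator]
  exact ⟨⟨v, hv⟩, h, rfl⟩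

end FoxCalculus

theorem commutator_mem_of_inter_trivial_general {J : Type} (K : Set J)
    (H : Subgroup (FreeGroup J)) (hH : H = Subgroup.closure (FreeGroup.of '' K))
    (R : Subgroup (FreeGroup J))
    (D : J → (MonoidAlgebra ℤ (FreeGroup J) →ₗ[ℤ] MonoidAlgebra ℤ (FreeGroup J)))
    (hD : ∀ j, IsFoxDerivative j (D j))
    (hHR : H ⊓ R = ⊥) :
    ∀ N : Subgroup (FreeGroup J), N.Normal → N ≤ R → ∀ v ∈ N,
      (∀ k, k ∉ K → D k (MonoidAlgebra.of ℤ (FreeGroup J) v) ∈ NIdeal N) →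
        v ∈ (⁅N, N⁆ : Subgroup (FreeGroup J)) := by
  intro N _ hNR v hv hvD
  have hHN : H ⊓ N = ⊥ := eq_bot_mono (inf_le_inf_left H hNR) hHR
  have hK : ∀ j ∈ K, FreeGroup.of j ∈ H := fun j hj =>
    hH ▸ Subgroup.subset_closure (Set.mem_image_of_mem _ hj)
  exact mem_commutator_of_foxDerivative_mem_nIdeal hD hv
    (foxDerivative_mem_nIdeal_of_inf_eq_bot hD hK hHN hv hvD)

/-- If `H ∩ R = 1`, then for every normal subgroup `N ⊆ R` and every `v ∈ N`,
`D_k(v) ≡ 0 mod ℤ[F]·(N−1)` for all `k ∈ J \ K` implies `v ∈ [N,N]`. -/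
theorem commutator_mem_of_inter_trivial {J : Type} (K : Set J)
    (H : Subgroup (FreeGroup J)) (hH : H = Subgroup.closure (FreeGroup.of '' K))
    (R : Subgroup (FreeGroup J)) (hR : R.Normal)
    (D : J → (MonoidAlgebra ℤ (FreeGroup J) →ₗ[ℤ] MonoidAlgebra ℤ (FreeGroup J)))
    (hD : ∀ j, IsFoxDerivative j (D j))
    (hHR : H ⊓ R = ⊥) :
    ∀ N : Subgroup (FreeGroup J), N.Normal → N ≤ R → ∀ v ∈ N,
      (∀ k, k ∉ K → D k (MonoidAlgebra.of ℤ (FreeGroup J) v) ∈ NIdeal N) →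
        v ∈ (⁅N, N⁆ : Subgroup (FreeGroup J)) :=
  commutator_mem_of_inter_trivial_general K H hH R D hD hHR
end

section
/- Let F be a free group, N a normal subgroup, S a Schreier transversal for N in F, and g_q a basis element of F. Then for every t ∈ S, the element D_q(t)·t⁻¹ ∈ ℤ[F] is a ℤ-linear combination (with coefficients ±1) of elements of the form (u·g_q^ε)⁻¹ where ε = ±1 and u·g_q^{max(ε,0)} ranges over initial segments of t lying in S; in particular D_q(t)·t⁻¹ is a sum of elements ±s⁻¹ with s ∈ S an initial segment of t. -/
open scoped Classical

/-- `S` is a Schreier transversal for `N` in the free group. -/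
def IsSchreierTransversal {α : Type} [DecidableEq α] (N : Subgroup (FreeGroup α))
    (S : Set (FreeGroup α)) : Prop :=
  (∀ f : FreeGroup α, ∃! s, s ∈ S ∧ s * f⁻¹ ∈ N) ∧
  (∀ s ∈ S, ∀ t : FreeGroup α, t.toWord <+: s.toWord → t ∈ S)

/-!
Fox's product rule gives `D(t'e)·(t'e)⁻¹ = D(t')·t'⁻¹ + D(e)·(t'e)⁻¹`. Peeling off the last
letter `e` of the reduced word `t` therefore adds the term `t⁻¹` when `e = g_q`, the term
`-t'⁻¹` when `e = g_q⁻¹`, and nothing otherwise; the prefix `t'` is again reduced and, `S`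
being closed under initial segments, again in `S`, so induction on the length of `t` applies.
-/

namespace FreeGroup

theorem of_inv_eq_mk {α : Type} (a : α) : (of a)⁻¹ = mk [(a, false)] := by
  rw [of, inv_mk]; rfl

variable {α : Type} [DecidableEq α]

theorem toWord_mk_of_toWord_eq_append {t : FreeGroup α} {L L' : List (α × Bool)}
    (h : t.toWord = L ++ L') : (mk L).toWord = L := by
  rw [toWord_mk, IsReduced.reduce_eq]
  exact isReduced_toWord.infix (h ▸ (List.prefix_append L L').isInfix)

theorem eq_mul_mk_of_toWord_eq_append {t t' : FreeGroup α} {L : List (α × Bool)}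
    (h : t.toWord = t'.toWord ++ L) : t = t' * mk L := by
  rw [← mk_toWord (x := t'), mul_mk, ← h, mk_toWord]

end FreeGroup

section Fox

variable {α : Type} {q : α}
  {D : MonoidAlgebra ℤ (FreeGroup α) →ₗ[ℤ] MonoidAlgebra ℤ (FreeGroup α)}

local notation "ι" => MonoidAlgebra.of ℤ (FreeGroup α)

theorem aug_of_s13 (g : FreeGroup α) : aug α (ι g) = 1 := by simp [aug]

namespace IsFoxDerivative

theorem map_one (hD : IsFoxDerivative q D) : D 1 = 0 := by
  simpa [map_one] using hD.1 1 1

theorem map_of_mul_s13 (hD : IsFoxDerivative q D) (x y : FreeGroup α) :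
    D (ι (x * y)) = D (ι x) * ι y + D (ι y) := by
  rw [MonoidHom.map_mul, hD.1, aug_of_s13, one_smul]

theorem map_of_inv_s13 (hD : IsFoxDerivative q D) (x : FreeGroup α) :
    D (ι x⁻¹) = -(D (ι x) * ι x⁻¹) := by
  have h := hD.map_of_mul_s13 x x⁻¹
  rw [mul_inv_cancel, MonoidHom.map_one, hD.map_one] at h
  exact eq_neg_of_add_eq_zero_right h.symm

theorem map_of_mul_mul_inv (hD : IsFoxDerivative q D) (x y : FreeGroup α) :
    D (ι (x * y)) * ι (x * y)⁻¹ = D (ι x) * ι x⁻¹ + D (ι y) * ι (x * y)⁻¹ := by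
  rw [hD.map_of_mul_s13, add_mul, mul_assoc, ← MonoidHom.map_mul,
    show y * (x * y)⁻¹ = x⁻¹ by group]

theorem map_of_of_self (hD : IsFoxDerivative q D) : D (ι (FreeGroup.of q)) = 1 := by
  rw [hD.2, if_pos rfl]

theorem map_of_of_inv_self (hD : IsFoxDerivative q D) :
    D (ι (FreeGroup.of q)⁻¹) = -ι (FreeGroup.of q)⁻¹ := by
  rw [hD.map_of_inv_s13, hD.map_of_of_self, one_mul]

theorem map_of_mk_singleton_of_ne (hD : IsFoxDerivative q D) {a : α} (hqa : q ≠ a) (b : Bool) :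
    D (ι (FreeGroup.mk [(a, b)])) = 0 := by
  cases b with
  | true => exact (hD.2 a).trans (if_neg hqa)
  | false =>
    rw [← FreeGroup.of_inv_eq_mk, hD.map_of_inv_s13, hD.2, if_neg hqa, zero_mul, neg_zero]

end IsFoxDerivative

end Fox

section Expansion

variable {α : Type} [DecidableEq α] (S : Set (FreeGroup α)) (q : α) (t : FreeGroup α)

local notation "ι" => MonoidAlgebra.of ℤ (FreeGroup α)

def IsFoxTerm (c : ℤ) (s : FreeGroup α) : Prop :=
  (s ∈ S ∧ s.toWord <+: t.toWord) ∧
    ((c = 1 ∧ ∃ u : FreeGroup α, s = u * FreeGroup.of q) ∨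
     (c = -1 ∧ (s * (FreeGroup.of q)⁻¹).toWord <+: t.toWord))

def HasFoxExpansion (x : MonoidAlgebra ℤ (FreeGroup α)) : Prop :=
  ∃ (m : ℕ) (c : Fin m → ℤ) (s : Fin m → FreeGroup α),
    (∀ i, IsFoxTerm S q t (c i) (s i)) ∧ x = ∑ i, c i • ι (s i)⁻¹

variable {S q t}

theorem IsFoxTerm.mono {t' : FreeGroup α} {c : ℤ} {s : FreeGroup α}
    (h : IsFoxTerm S q t' c s) (ht : t'.toWord <+: t.toWord) : IsFoxTerm S q t c s :=
  ⟨⟨h.1.1, h.1.2.trans ht⟩, h.2.imp id fun h' => ⟨h'.1, h'.2.trans ht⟩⟩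

namespace HasFoxExpansion

theorem zero : HasFoxExpansion S q t 0 :=
  ⟨0, Fin.elim0, Fin.elim0, fun i => i.elim0, by simp⟩

theorem mono {t' : FreeGroup α} {x : MonoidAlgebra ℤ (FreeGroup α)}
    (h : HasFoxExpansion S q t' x) (ht : t'.toWord <+: t.toWord) : HasFoxExpansion S q t x :=
  let ⟨m, c, s, hcs, hx⟩ := h
  ⟨m, c, s, fun i => (hcs i).mono ht, hx⟩

theorem add_term {x : MonoidAlgebra ℤ (FreeGroup α)} {c : ℤ} {s : FreeGroup α}
    (h : HasFoxExpansion S q t x) (hcs : IsFoxTerm S q t c s) :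
    HasFoxExpansion S q t (x + c • ι s⁻¹) := by
  obtain ⟨m, c', s', hcs', rfl⟩ := h
  refine ⟨m + 1, Fin.snoc c' c, Fin.snoc s' s, fun i => ?_, ?_⟩
  · refine Fin.lastCases ?_ (fun j => ?_) i
    · simpa using hcs
    · simpa using hcs' j
  · simp [Fin.sum_univ_castSucc]

end HasFoxExpansion

end Expansion

section Transversal

variable {α : Type} [DecidableEq α] {S : Set (FreeGroup α)} {q : α}
  {D : MonoidAlgebra ℤ (FreeGroup α) →ₗ[ℤ] MonoidAlgebra ℤ (FreeGroup α)}

local notation "ι" => MonoidAlgebra.of ℤ (FreeGroup α)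

theorem IsFoxDerivative.hasFoxExpansion_append_singleton (hD : IsFoxDerivative q D)
    {t t' : FreeGroup α} {a : α} {b : Bool} (htw : t.toWord = t'.toWord ++ [(a, b)])
    (ht : t ∈ S) (ht' : t' ∈ S) (h : HasFoxExpansion S q t' (D (ι t') * ι t'⁻¹)) :
    HasFoxExpansion S q t (D (ι t) * ι t⁻¹) := by
  have hpre : t'.toWord <+: t.toWord := htw ▸ List.prefix_append _ _
  have hte : t = t' * FreeGroup.mk [(a, b)] := FreeGroup.eq_mul_mk_of_toWord_eq_append htw
  replace h := h.mono hpre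
  rw [hte, hD.map_of_mul_mul_inv, ← hte]
  rcases eq_or_ne q a with rfl | hqa
  · cases b with
    | true =>
      have hterm : IsFoxTerm S q t 1 t := ⟨⟨ht, List.prefix_refl _⟩, .inl ⟨rfl, t', hte⟩⟩
      rw [← FreeGroup.of, hD.map_of_of_self, one_mul]
      simpa using h.add_term hterm
    | false =>
      rw [← FreeGroup.of_inv_eq_mk] at hte ⊢
      have hterm : IsFoxTerm S q t (-1) t' := ⟨⟨ht', hpre⟩, .inr ⟨rfl, hte ▸ List.prefix_refl _⟩⟩
      rw [hD.map_of_of_inv_self, neg_mul, ← MonoidHom.map_mul,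
        show (FreeGroup.of q)⁻¹ * t⁻¹ = t'⁻¹ by rw [hte]; group, ← neg_one_smul ℤ]
      exact h.add_term hterm
  · rw [hD.map_of_mk_singleton_of_ne hqa, zero_mul, add_zero]
    exact h

theorem IsFoxDerivative.hasFoxExpansion_of_mem (hD : IsFoxDerivative q D)
    (hS : ∀ s ∈ S, ∀ t : FreeGroup α, t.toWord <+: s.toWord → t ∈ S) {t : FreeGroup α}
    (ht : t ∈ S) : HasFoxExpansion S q t (D (ι t) * ι t⁻¹) := by
  generalize hw : t.toWord = L
  induction L using List.reverseRecOn generalizing t with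
  | nil =>
    rw [FreeGroup.toWord_eq_nil_iff] at hw
    subst hw
    rw [MonoidHom.map_one, hD.map_one, zero_mul]
    exact .zero
  | append_singleton L e ih =>
    have hL : (FreeGroup.mk L).toWord = L := FreeGroup.toWord_mk_of_toWord_eq_append hw
    have hpre : (FreeGroup.mk L).toWord <+: t.toWord := by
      rw [hL, hw]
      exact List.prefix_append _ _
    have ht' : FreeGroup.mk L ∈ S := hS t ht _ hpre
    exact hD.hasFoxExpansion_append_singleton (hw.trans (by rw [hL])) ht ht' (ih ht' hL)

end Transversal

theorem fox_derivative_transversal_decomposition_general {α : Type} [DecidableEq α]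
    (N : Subgroup (FreeGroup α)) (S : Set (FreeGroup α))
    (hS : IsSchreierTransversal N S) (q : α)
    (D : MonoidAlgebra ℤ (FreeGroup α) →ₗ[ℤ] MonoidAlgebra ℤ (FreeGroup α))
    (hD : IsFoxDerivative q D) (t : FreeGroup α) (ht : t ∈ S) :
    ∃ (m : ℕ) (c : Fin m → ℤ) (s : Fin m → FreeGroup α),
      (∀ i, (s i ∈ S ∧ (s i).toWord <+: t.toWord) ∧
        ((c i = 1 ∧ ∃ u : FreeGroup α, s i = u * FreeGroup.of q) ∨
         (c i = -1 ∧ (s i * (FreeGroup.of q)⁻¹).toWord <+: t.toWord))) ∧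
      D (MonoidAlgebra.of ℤ (FreeGroup α) t) * MonoidAlgebra.of ℤ (FreeGroup α) t⁻¹ =
        ∑ i, c i • MonoidAlgebra.of ℤ (FreeGroup α) (s i)⁻¹ :=
  hD.hasFoxExpansion_of_mem hS.2 ht

/-- For `t ∈ S`, the element `D_q(t)·t⁻¹` is a sum of terms `±(u·g_q^ε)⁻¹` along the
occurrences of `g_q^{±1}` in `t`; in particular it is a sum of elements `±s⁻¹` with
`s ∈ S` an initial segment of `t`. -/
theorem fox_derivative_transversal_decomposition {α : Type} [DecidableEq α]
    (N : Subgroup (FreeGroup α)) (hN : N.Normal) (S : Set (FreeGroup α))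
    (hS : IsSchreierTransversal N S) (q : α)
    (D : MonoidAlgebra ℤ (FreeGroup α) →ₗ[ℤ] MonoidAlgebra ℤ (FreeGroup α))
    (hD : IsFoxDerivative q D) (t : FreeGroup α) (ht : t ∈ S) :
    ∃ (m : ℕ) (c : Fin m → ℤ) (s : Fin m → FreeGroup α),
      (∀ i, (s i ∈ S ∧ (s i).toWord <+: t.toWord) ∧
        ((c i = 1 ∧ ∃ u : FreeGroup α, s i = u * FreeGroup.of q) ∨
         (c i = -1 ∧ (s i * (FreeGroup.of q)⁻¹).toWord <+: t.toWord))) ∧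
      D (MonoidAlgebra.of ℤ (FreeGroup α) t) * MonoidAlgebra.of ℤ (FreeGroup α) t⁻¹ =
        ∑ i, c i • MonoidAlgebra.of ℤ (FreeGroup α) (s i)⁻¹ :=
  fox_derivative_transversal_decomposition_general N S hS q D hD t ht
end
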